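/- arXiv:1609.01365 — 5 statements merged into one kernel-verified Lean document; each statement's English description precedes it below -/
import Mathlib

section
/- Any two quadratic enhancements q, q' : V → ℤ/4 of the same nonsingular symmetric bilinear form λ : V × V → ℤ/2 on a finite-dimensional ℤ/2-vector space differ by a linear map: there exists t ∈ V such that q'(x) - q(x) = i(λ(x,t)) for all x ∈ V, where i : ℤ/2 → ℤ/4 sends 1 to 2. -/
/-- Any two quadratic enhancements `q, q' : V → ℤ/4` of the same nonsingular
symmetric bilinear form `lam` on a finite-dimensional `ℤ/2`-vector space differ by a linear
map: there is `t : V` with `q' x - q x = i (lam x t)` for all `x`, where `i : ℤ/2 → ℤ/4`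
sends `1` to `2`. -/
theorem quadratic_enhancements_differ_by_linear_map {V : Type} [AddCommGroup V]
    [Module (ZMod 2) V] [FiniteDimensional (ZMod 2) V]
    (lam : LinearMap.BilinForm (ZMod 2) V)
    (hsymm : ∀ x y : V, lam x y = lam y x)
    (hnd : lam.Nondegenerate)
    (q q' : V → ZMod 4)
    (hq : ∀ x y : V, q (x + y) = q x + q y + 2 * ((lam x y).val : ZMod 4))
    (hq' : ∀ x y : V, q' (x + y) = q' x + q' y + 2 * ((lam x y).val : ZMod 4)) :
    ∃ t : V, ∀ x : V, q' x - q x = 2 * ((lam x t).val : ZMod 4) := by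
  set d : V → ZMod 4 := fun x => q' x - q x with hd
  have hd_add : ∀ x y, d (x + y) = d x + d y := by
    intro x y
    simp only [hd]
    rw [hq, hq']
    ring
  have hd0 : d 0 = 0 := by
    have h := hd_add 0 0
    simp only [add_zero] at h
    exact (left_eq_add.mp h)
  have hxx : ∀ x : V, x + x = 0 := by
    intro x
    have : (2 : ZMod 2) • x = 0 := by
      rw [show (2 : ZMod 2) = 0 by decide, zero_smul]
    rwa [two_smul] at this
  have hmem : ∀ x, d x = 0 ∨ d x = 2 := by
    intro x
    have h : d x + d x = 0 := by rw [← hd_add, hxx, hd0]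
    revert h
    generalize d x = a
    revert a
    decide
  -- define the linear functional
  set f : V →+ ZMod 2 :=
    { toFun := fun x => if d x = 0 then 0 else 1
      map_zero' := by simp [hd0]
      map_add' := by
        intro x y
        rcases hmem x with hx | hx <;> rcases hmem y with hy | hy <;>
          simp [hd_add, hx, hy] <;> decide } with hf
  set ℓ : V →ₗ[ZMod 2] ZMod 2 := f.toZModLinearMap 2 with hℓ
  refine ⟨(lam.toDual hnd).symm ℓ, ?_⟩
  intro x
  have hlt : lam ((lam.toDual hnd).symm ℓ) x = ℓ x :=
    LinearMap.BilinForm.apply_toDual_symm_apply ℓ x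
  rw [hsymm x, hlt]
  show d x = 2 * ((if d x = 0 then (0 : ZMod 2) else 1).val : ZMod 4)
  rcases hmem x with hx | hx <;> rw [hx] <;> decide
end

section
/- Gauss sum definition is well-posed: for a quadratic enhancement q : V → ℤ/4 of a nonsingular symmetric bilinear form λ on a finite-dimensional ℤ/2-vector space V of dimension n, the complex Gauss sum Σ_{x∈V} i^{q(x)} (where i² = -1 and i^{q(x)} means i raised to any integer lift of q(x)) has absolute value √2^n. Hence there is a well-defined element BK(V,λ,q) ∈ ℤ/8 with Σ_{x∈V} i^{q(x)} = √2^n · e^{2πi·BK/8}. -/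
open Complex

noncomputable def Efn (k : ℤ) : ℂ := Complex.exp (2 * Real.pi * Complex.I * k / 8)

lemma Efn_add (j k : ℤ) : Efn (j + k) = Efn j * Efn k := by
  simp only [Efn, ← Complex.exp_add]
  congr 1; push_cast; ring

lemma Efn_period (k m : ℤ) : Efn (k + 8 * m) = Efn k := by
  rw [Efn_add]
  have : Efn (8 * m) = 1 := by
    rw [Efn]
    have : (2 * (Real.pi:ℂ) * Complex.I * ((8*m : ℤ)) / 8) = (m : ℂ) * (2 * Real.pi * Complex.I) := by
      push_cast; ring
    rw [this, Complex.exp_int_mul_two_pi_mul_I]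
  rw [this, mul_one]

lemma sqrt2_sq : (Real.sqrt 2 : ℂ) * (Real.sqrt 2 : ℂ) = 2 := by
  rw [← Complex.ofReal_mul, Real.mul_self_sqrt (by norm_num : (0:ℝ) ≤ 2)]
  norm_num

lemma sqrt2_ne : (Real.sqrt 2 : ℂ) ≠ 0 := by
  intro h
  have := sqrt2_sq
  rw [h] at this
  simp at this

lemma Efn_one : (Real.sqrt 2 : ℂ) * Efn 1 = 1 + Complex.I := by
  have h : (2 * (Real.pi:ℂ) * Complex.I * ((1:ℤ):ℂ) / 8) = ((Real.pi/4 : ℝ) : ℂ) * Complex.I := by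
    push_cast; ring
  rw [Efn, h, Complex.exp_mul_I, ← Complex.ofReal_cos, ← Complex.ofReal_sin,
    Real.cos_pi_div_four, Real.sin_pi_div_four]
  have h2 : (Real.sqrt 2 : ℂ) * ((Real.sqrt 2 / 2 : ℝ) : ℂ) = 1 := by
    push_cast
    rw [mul_div_assoc', sqrt2_sq]
    norm_num
  calc (Real.sqrt 2 : ℂ) * (((Real.sqrt 2 / 2 : ℝ):ℂ) + ((Real.sqrt 2 / 2 : ℝ):ℂ) * Complex.I)
      = (Real.sqrt 2 : ℂ) * ((Real.sqrt 2 / 2 : ℝ):ℂ) * (1 + Complex.I) := by ring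
    _ = 1 + Complex.I := by rw [h2, one_mul]

lemma Efn_vals : Efn 0 = 1 ∧ Efn 2 = Complex.I ∧ Efn 4 = -1 ∧ Efn 6 = -Complex.I := by
  have h1 : Efn 1 = (1 + Complex.I) / (Real.sqrt 2 : ℂ) := by
    rw [← Efn_one]
    field_simp [sqrt2_ne]
  have h0 : Efn 0 = 1 := by simp [Efn]
  have h2 : Efn 2 = Complex.I := by
    rw [show (2:ℤ) = 1 + 1 by norm_num, Efn_add, h1, div_mul_div_comm, sqrt2_sq]
    rw [show (1 + Complex.I) * (1 + Complex.I) = 2 * Complex.I by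
      linear_combination Complex.I_sq]
    field_simp
  have h4 : Efn 4 = -1 := by
    rw [show (4:ℤ) = 2 + 2 by norm_num, Efn_add, h2, Complex.I_mul_I]
  have h6 : Efn 6 = -Complex.I := by
    rw [show (6:ℤ) = 4 + 2 by norm_num, Efn_add, h4, h2]; ring
  exact ⟨h0, h2, h4, h6⟩

lemma key_arith (n : ℕ) : ∀ a b : ℤ, a^2 + b^2 = 2^n →
    ∃ k : ℤ, (a:ℂ) + b * Complex.I = (Real.sqrt 2 : ℂ)^n * Efn k := by
  obtain ⟨h0, h2, h4, h6⟩ := Efn_vals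
  induction n with
  | zero =>
    intro a b h
    simp only [pow_zero, one_mul]
    have ha1 : -1 ≤ a := by nlinarith [sq_nonneg b, sq_nonneg (a+1)]
    have ha2 : a ≤ 1 := by nlinarith [sq_nonneg b, sq_nonneg (a-1)]
    have hb1 : -1 ≤ b := by nlinarith [sq_nonneg a, sq_nonneg (b+1)]
    have hb2 : b ≤ 1 := by nlinarith [sq_nonneg a, sq_nonneg (b-1)]
    interval_cases a <;> interval_cases b <;> [
      (exact absurd h (by norm_num));
      (exact ⟨4, by rw [h4]; push_cast; ring⟩);
      (exact absurd h (by norm_num));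
      (exact ⟨6, by rw [h6]; push_cast; ring⟩);
      (exact absurd h (by norm_num));
      (exact ⟨2, by rw [h2]; push_cast; ring⟩);
      (exact absurd h (by norm_num));
      (exact ⟨0, by rw [h0]; push_cast; ring⟩);
      (exact absurd h (by norm_num))]
  | succ n ih =>
    intro a b h
    have hev : Even (a^2 + b^2) := by
      rw [h, pow_succ]
      exact ⟨2^n, by ring⟩
    have hab : Even (a + b) := by
      rw [Int.even_add] at hev ⊢
      simpa [Int.even_pow] using hev
    obtain ⟨s, hs2⟩ := hab
    have hba : Even (b - a) := ⟨s - a, by omega⟩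
    obtain ⟨t, ht2⟩ := hba
    have ha : a = s - t := by omega
    have hb : b = s + t := by omega
    subst ha hb
    have hst2 : 2 * (s^2 + t^2) = 2 * 2^n := by
      rw [← pow_succ']
      linear_combination h
    have hst : s^2 + t^2 = 2^n := mul_left_cancel₀ (by norm_num : (2:ℤ) ≠ 0) hst2
    obtain ⟨k, hk⟩ := ih s t hst
    refine ⟨k + 1, ?_⟩
    have hfac : ((s - t : ℤ):ℂ) + ((s + t : ℤ):ℂ) * Complex.I
        = ((s:ℂ) + (t:ℂ) * Complex.I) * (1 + Complex.I) := by
      push_cast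
      linear_combination (-(t:ℂ)) * Complex.I_sq
    rw [hfac, hk, Efn_add, ← Efn_one, pow_succ]
    ring


lemma I_pow_mod (m : ℕ) : Complex.I ^ (m % 4) = Complex.I ^ m := by
  conv_rhs => rw [← Nat.div_add_mod m 4]
  rw [pow_add, pow_mul, Complex.I_pow_four, one_pow, one_mul]

lemma I_pow_val_add (a b : ZMod 4) :
    Complex.I ^ (a + b).val = Complex.I ^ a.val * Complex.I ^ b.val := by
  rw [ZMod.val_add, I_pow_mod, pow_add]

lemma I_pow_two_mul (e : ZMod 2) :
    Complex.I ^ ((2 * ((e.val : ZMod 4))).val) = (-1 : ℂ) ^ e.val := by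
  have h01 : ∀ e : ZMod 2, e = 0 ∨ e = 1 := by decide
  rcases h01 e with h | h <;> subst h
  · rw [show ((2 * (((0:ZMod 2).val : ZMod 4))).val) = 0 from by decide,
      show (0:ZMod 2).val = 0 from by decide]
    norm_num
  · rw [show ((2 * (((1:ZMod 2).val : ZMod 4))).val) = 2 from by decide,
      show (1:ZMod 2).val = 1 from by decide]
    simp [Complex.I_sq]

lemma neg_one_pow_val_add_one (e : ZMod 2) :
    ((-1:ℂ)) ^ ((e + 1).val) = -((-1:ℂ)) ^ e.val := by
  have h01 : ∀ e : ZMod 2, e = 0 ∨ e = 1 := by decide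
  rcases h01 e with h | h <;> subst h
  · rw [show ((0:ZMod 2) + 1).val = 1 from by decide, show (0:ZMod 2).val = 0 from by decide]
    norm_num
  · rw [show ((1:ZMod 2) + 1).val = 0 from by decide, show (1:ZMod 2).val = 1 from by decide]
    norm_num

lemma sqrt_two_pow (n : ℕ) : Real.sqrt (2 ^ n) = (Real.sqrt 2) ^ n := by
  induction n with
  | zero => simp
  | succ n ih =>
    rw [pow_succ, pow_succ, Real.sqrt_mul (by positivity), ih]

/-- For a quadratic enhancement `q : V → ℤ/4` of a nonsingular symmetric bilinear
form on a finite-dimensional `ℤ/2`-vector space `V` of dimension `n`, the Gauss sum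
`∑ x, i^{q x}` has absolute value `√2 ^ n`, and there is a unique `b : ℤ/8` ("BK(V,λ,q)")
with `∑ x, i^{q x} = √2 ^ n * exp(2πi b / 8)`. -/
theorem gauss_sum_well_posed {V : Type} [AddCommGroup V] [Module (ZMod 2) V] [Fintype V]
    [FiniteDimensional (ZMod 2) V]
    (lam : LinearMap.BilinForm (ZMod 2) V)
    (hsymm : ∀ x y : V, lam x y = lam y x)
    (hnd : lam.Nondegenerate)
    (q : V → ZMod 4)
    (hq : ∀ x y : V, q (x + y) = q x + q y + 2 * ((lam x y).val : ZMod 4)) :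
    ‖∑ x : V, Complex.I ^ (q x).val‖
        = (Real.sqrt 2) ^ (Module.finrank (ZMod 2) V) ∧
    ∃! b : ZMod 8, (∑ x : V, Complex.I ^ (q x).val)
        = ((Real.sqrt 2) ^ (Module.finrank (ZMod 2) V) : ℝ)
          * Complex.exp (2 * Real.pi * Complex.I * (b.val : ℂ) / 8) := by
  classical
  set n := Module.finrank (ZMod 2) V with hn
  set g : V → ℂ := fun x => Complex.I ^ (q x).val with hg
  set G : ℂ := ∑ x : V, g x with hG
  -- q 0 = 0
  have hq0 : q 0 = 0 := by
    have h := hq 0 0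
    simp only [add_zero, map_zero, LinearMap.zero_apply, ZMod.val_zero, Nat.cast_zero,
      mul_zero] at h
    have : q 0 + 0 = q 0 + q 0 := by rw [add_zero]; exact h
    exact (add_left_cancel this).symm
  have hg0 : g 0 = 1 := by
    simp only [hg, hq0, ZMod.val_zero, pow_zero]
  have hgmul : ∀ x y, g (x + y) = g x * g y * ((-1:ℂ)) ^ (lam x y).val := by
    intro x y
    show Complex.I ^ (q (x+y)).val = _
    rw [hq, I_pow_val_add, I_pow_val_add, I_pow_two_mul]
  have hgconj : ∀ y, g y * (starRingEnd ℂ) (g y) = 1 := by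
    intro y
    rw [Complex.mul_conj]
    have : Complex.normSq (g y) = 1 := by
      show Complex.normSq (Complex.I ^ (q y).val) = 1
      rw [map_pow, Complex.normSq_I, one_pow]
    rw [this]
    norm_num
  -- inner character sum
  have hinner : ∀ z : V, z ≠ 0 → ∑ y : V, ((-1:ℂ)) ^ (lam y z).val = 0 := by
    intro z hz
    obtain ⟨y0, hy0⟩ : ∃ y0, lam y0 z ≠ 0 := by
      by_contra hc
      push_neg at hc
      exact hz (hnd.1 z (fun y => by rw [hsymm]; exact hc y))
    have hy0' : lam y0 z = 1 := by
      have h01 : ∀ e : ZMod 2, e ≠ 0 → e = 1 := by decide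
      exact h01 _ hy0
    have hrev : ∑ y : V, ((-1:ℂ)) ^ (lam y z).val
        = ∑ y : V, ((-1:ℂ)) ^ (lam (y + y0) z).val :=
      (Fintype.sum_equiv (Equiv.addRight y0)
        (fun y => ((-1:ℂ)) ^ (lam (y + y0) z).val)
        (fun y => ((-1:ℂ)) ^ (lam y z).val) (fun y => rfl)).symm
    have hstep : ∀ y : V, ((-1:ℂ)) ^ (lam (y + y0) z).val = -((-1:ℂ)) ^ (lam y z).val := by
      intro y
      have : lam (y + y0) z = lam y z + 1 := by
        rw [map_add, LinearMap.add_apply, hy0']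
      rw [this, neg_one_pow_val_add_one]
    have : ∑ y : V, ((-1:ℂ)) ^ (lam y z).val = -∑ y : V, ((-1:ℂ)) ^ (lam y z).val := by
      calc ∑ y : V, ((-1:ℂ)) ^ (lam y z).val
          = ∑ y : V, ((-1:ℂ)) ^ (lam (y + y0) z).val := hrev
        _ = ∑ y : V, -((-1:ℂ)) ^ (lam y z).val := by
            exact Finset.sum_congr rfl (fun y _ => hstep y)
        _ = -∑ y : V, ((-1:ℂ)) ^ (lam y z).val := by rw [Finset.sum_neg_distrib]
    have h2 : (2:ℂ) * ∑ y : V, ((-1:ℂ)) ^ (lam y z).val = 0 := by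
      linear_combination this
    exact (mul_eq_zero.mp h2).resolve_left (by norm_num)
  -- normSq G = card V
  have hkey : (Complex.normSq G : ℂ) = (Fintype.card V : ℂ) := by
    rw [← Complex.mul_conj, hG, map_sum, Finset.sum_mul_sum]
    have step1 : ∀ y : V, ∑ x : V, g x * (starRingEnd ℂ) (g y)
        = ∑ z : V, g z * ((-1:ℂ)) ^ (lam y z).val := by
      intro y
      have := Fintype.sum_equiv (Equiv.addLeft y)
        (fun z => g (y + z) * (starRingEnd ℂ) (g y))
        (fun x => g x * (starRingEnd ℂ) (g y)) (fun z => rfl)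
      rw [← this]
      refine Finset.sum_congr rfl (fun z _ => ?_)
      show g (y + z) * (starRingEnd ℂ) (g y) = g z * ((-1:ℂ)) ^ (lam y z).val
      rw [hgmul]
      calc g y * g z * ((-1:ℂ)) ^ (lam y z).val * (starRingEnd ℂ) (g y)
          = (g y * (starRingEnd ℂ) (g y)) * (g z * ((-1:ℂ)) ^ (lam y z).val) := by ring
        _ = g z * ((-1:ℂ)) ^ (lam y z).val := by rw [hgconj, one_mul]
    calc ∑ x : V, ∑ y : V, g x * (starRingEnd ℂ) (g y)
        = ∑ y : V, ∑ x : V, g x * (starRingEnd ℂ) (g y) := Finset.sum_comm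
      _ = ∑ y : V, ∑ z : V, g z * ((-1:ℂ)) ^ (lam y z).val := by
          exact Finset.sum_congr rfl (fun y _ => step1 y)
      _ = ∑ z : V, ∑ y : V, g z * ((-1:ℂ)) ^ (lam y z).val := Finset.sum_comm
      _ = ∑ z : V, g z * ∑ y : V, ((-1:ℂ)) ^ (lam y z).val := by
          exact Finset.sum_congr rfl (fun z _ => by rw [Finset.mul_sum])
      _ = g 0 * ∑ y : V, ((-1:ℂ)) ^ (lam y 0).val := by
          refine Finset.sum_eq_single_of_mem 0 (Finset.mem_univ _) (fun z _ hz => ?_)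
          rw [hinner z hz, mul_zero]
      _ = (Fintype.card V : ℂ) := by
          rw [hg0, one_mul]
          have : ∀ y : V, ((-1:ℂ)) ^ (lam y 0).val = 1 := by
            intro y
            rw [map_zero, ZMod.val_zero, pow_zero]
          rw [Finset.sum_congr rfl (fun y _ => this y), Finset.sum_const, Finset.card_univ]
          simp
  have hcard : Fintype.card V = 2 ^ n := by
    have := Module.card_eq_pow_finrank (K := ZMod 2) (V := V)
    simpa [ZMod.card] using this
  have hnsq : Complex.normSq G = (2:ℝ) ^ n := by
    have : (Complex.normSq G : ℂ) = ((2:ℝ)^n : ℝ) := by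
      rw [hkey, hcard]
      push_cast
      try ring
    exact_mod_cast this
  have habs : ‖G‖ = (Real.sqrt 2) ^ n := by
    rw [Complex.norm_def, hnsq, ← sqrt_two_pow]
  refine ⟨habs, ?_⟩
  -- integrality
  set G' : GaussianInt := ∑ x : V, (⟨0, 1⟩ : GaussianInt) ^ (q x).val with hG'def
  have hG'C : (G' : ℂ) = G := by
    rw [hG'def, map_sum]
    refine Finset.sum_congr rfl (fun x _ => ?_)
    rw [map_pow]
    congr 1
    rw [GaussianInt.toComplex_def']
    simp
  have hsq : G'.re ^ 2 + G'.im ^ 2 = 2 ^ n := by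
    have h1 : Complex.normSq (G' : ℂ) = ((G'.re:ℝ))^2 + ((G'.im:ℝ))^2 := by
      rw [GaussianInt.toComplex_def]
      exact_mod_cast Complex.normSq_add_mul_I (G'.re:ℝ) (G'.im:ℝ)
    have h2 : ((G'.re ^ 2 + G'.im ^ 2 : ℤ) : ℝ) = ((2^n : ℤ) : ℝ) := by
      push_cast
      rw [← h1, hG'C, hnsq]
    exact_mod_cast h2
  obtain ⟨k, hk⟩ := key_arith n G'.re G'.im hsq
  have hGk : G = (Real.sqrt 2 : ℂ) ^ n * Efn k := by
    rw [← hG'C, GaussianInt.toComplex_def]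
    exact_mod_cast hk
  set b0 : ZMod 8 := (k : ZMod 8) with hb0
  have hval : ∃ m : ℤ, k = (b0.val : ℤ) + 8 * m := by
    have h8 : ((8:ℕ):ℤ) ∣ (k - (b0.val : ℤ)) := by
      rw [← ZMod.intCast_zmod_eq_zero_iff_dvd]
      push_cast
      rw [ZMod.natCast_val, ZMod.cast_id, hb0, sub_self]
    obtain ⟨m, hm⟩ := h8
    exact ⟨m, by push_cast at hm; linarith⟩
  obtain ⟨m, hm⟩ := hval
  have hEfn : Efn k = Efn (b0.val : ℤ) := by
    rw [hm, Efn_period]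
  have hexp : ∀ c : ZMod 8, Complex.exp (2 * Real.pi * Complex.I * (c.val : ℂ) / 8)
      = Efn (c.val : ℤ) := by
    intro c
    rw [Efn]
    norm_num
  refine ⟨b0, ?_, ?_⟩
  · show G = ((Real.sqrt 2 ^ n : ℝ) : ℂ) * Complex.exp (2 * Real.pi * Complex.I * ((b0.val : ℕ) : ℂ) / 8)
    rw [hexp b0, ← hEfn, hGk]
    push_cast
    ring
  · intro c hc
    have hcEq : (Real.sqrt 2 : ℂ) ^ n * Efn (c.val : ℤ) = (Real.sqrt 2 : ℂ) ^ n * Efn (b0.val : ℤ) := by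
      rw [← hEfn, ← hGk, hc, hexp c]
      push_cast
      ring
    have hEe : Efn (c.val : ℤ) = Efn (b0.val : ℤ) :=
      mul_left_cancel₀ (pow_ne_zero _ sqrt2_ne) hcEq
    rw [Efn, Efn, Complex.exp_eq_exp_iff_exists_int] at hEe
    obtain ⟨mm, hmm⟩ := hEe
    have h2pi : (2 * (Real.pi:ℂ) * Complex.I) ≠ 0 := Complex.two_pi_I_ne_zero
    have hcb : ((c.val : ℤ) : ℂ) = ((b0.val : ℤ) : ℂ) + 8 * mm := by
      apply mul_left_cancel₀ h2pi
      linear_combination 8 * hmm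
    have hcbZ : (c.val : ℤ) = (b0.val : ℤ) + 8 * mm := by exact_mod_cast hcb
    have hcv : c.val < 8 := ZMod.val_lt c
    have hbv : b0.val < 8 := ZMod.val_lt b0
    have : c.val = b0.val := by omega
    exact ZMod.val_injective 8 this
end

section
/- If a nonsingular quadratic enhancement (V, λ, q) over ℤ/2 admits a lagrangian, i.e. a subspace L ⊆ V with L = L^⊥ (with respect to λ) and q|_L = 0, then BK(V, λ, q) = 0 ∈ ℤ/8. -/
private lemma Ipow_mod (k : ℕ) : Complex.I ^ (k % 4) = Complex.I ^ k := by
  conv_rhs => rw [← Nat.div_add_mod k 4]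
  rw [pow_add, pow_mul, Complex.I_pow_four, one_pow, one_mul]

private lemma Ipow_add (a c : ZMod 4) :
    Complex.I ^ (a + c).val = Complex.I ^ a.val * Complex.I ^ c.val := by
  rw [ZMod.val_add, Ipow_mod, pow_add]

private lemma zmod2_cases (c : ZMod 2) : c = 0 ∨ c = 1 := by revert c; decide

private lemma Ipow_two_mul (c : ZMod 2) :
    Complex.I ^ ((2 * (c.val : ZMod 4)).val) = (-1 : ℂ) ^ c.val := by
  rcases zmod2_cases c with h | h <;> subst h
  · norm_num [show ((2 * (((0:ZMod 2).val : ℕ) : ZMod 4)).val) = 0 by decide]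
  · norm_num [show ((2:ZMod 4).val) = 2 by decide,
      show ((1:ZMod 2).val) = 1 by decide, pow_two, Complex.I_mul_I]

private lemma neg_one_pow_succ (a : ZMod 2) :
    (-1 : ℂ) ^ ((a + 1).val) = -(-1 : ℂ) ^ a.val := by
  rcases zmod2_cases a with h | h <;> subst h <;>
    norm_num [show ((0+1:ZMod 2).val) = 1 by decide, show ((2:ZMod 2).val) = 0 by decide,
      show ((0:ZMod 2).val) = 0 by decide, show ((1:ZMod 2).val) = 1 by decide]



/-- If a nonsingular quadratic enhancement `(V, lam, q)` over `ℤ/2` admits a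
lagrangian `L` (i.e. `L = L^⊥` and `q` vanishes on `L`), then its Brown-Kervaire invariant
(defined via the Gauss sum) is `0 ∈ ℤ/8`. -/
theorem brown_kervaire_of_lagrangian {V : Type} [AddCommGroup V] [Module (ZMod 2) V]
    [Fintype V] [FiniteDimensional (ZMod 2) V]
    (lam : LinearMap.BilinForm (ZMod 2) V)
    (hsymm : ∀ x y : V, lam x y = lam y x)
    (hnd : lam.Nondegenerate)
    (q : V → ZMod 4)
    (hq : ∀ x y : V, q (x + y) = q x + q y + 2 * ((lam x y).val : ZMod 4))
    (L : Submodule (ZMod 2) V)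
    (hL : ∀ x : V, x ∈ L ↔ ∀ l ∈ L, lam x l = 0)
    (hqL : ∀ x ∈ L, q x = 0)
    (b : ZMod 8)
    (hb : (∑ x : V, Complex.I ^ (q x).val)
        = ((Real.sqrt 2) ^ (Module.finrank (ZMod 2) V) : ℝ)
          * Complex.exp (2 * Real.pi * Complex.I * (b.val : ℂ) / 8)) :
    b = 0 := by
  classical
  haveI : DecidablePred (fun x => x ∈ L) := fun _ => Classical.propDecidable _
  set N : ℕ := Fintype.card L with hN
  set S : ℂ := ∑ x : V, Complex.I ^ (q x).val with hS
  -- character sum over the lagrangian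
  have char : ∀ x : V, (∑ l : L, (-1:ℂ) ^ ((lam x (l:V)).val)) =
      if x ∈ L then (N : ℂ) else 0 := by
    intro x
    by_cases hx : x ∈ L
    · rw [if_pos hx]
      have h1 : ∀ l : L, (-1:ℂ) ^ ((lam x (l:V)).val) = 1 := by
        intro l
        rw [(hL x).mp hx (l:V) l.2]
        norm_num [show ((0:ZMod 2).val) = 0 by decide]
      rw [Finset.sum_congr rfl (fun l _ => h1 l), Finset.sum_const, Finset.card_univ]
      simp [hN]
    · rw [if_neg hx]
      obtain ⟨l0, hl0L, hl0⟩ : ∃ l0 ∈ L, lam x l0 ≠ 0 := by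
        by_contra h
        push_neg at h
        exact hx ((hL x).mpr fun l hl => h l hl)
      have hl0' : lam x l0 = 1 := by
        rcases zmod2_cases (lam x l0) with h | h
        · exact absurd h hl0
        · exact h
      have hswap : (∑ l : L, (-1:ℂ) ^ ((lam x (l:V)).val))
          = ∑ l : L, (-1:ℂ) ^ ((lam x (((l + ⟨l0, hl0L⟩ : L) : V))).val) :=
        Fintype.sum_equiv (Equiv.addRight (⟨l0, hl0L⟩ : L))
          (fun l => (-1:ℂ) ^ ((lam x (((l + ⟨l0, hl0L⟩ : L) : V))).val))
          (fun l => (-1:ℂ) ^ ((lam x (l:V)).val)) (fun l => rfl) |>.symm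
      have hterm : ∀ l : L, (-1:ℂ) ^ ((lam x (((l + ⟨l0, hl0L⟩ : L) : V))).val)
          = -(-1:ℂ) ^ ((lam x (l:V)).val) := by
        intro l
        have : lam x (((l + ⟨l0, hl0L⟩ : L) : V)) = lam x (l:V) + 1 := by
          rw [Submodule.coe_add, map_add, hl0']
        rw [this, neg_one_pow_succ]
      rw [Finset.sum_congr rfl (fun l _ => hterm l), Finset.sum_neg_distrib] at hswap
      have h2 : (2:ℂ) * (∑ l : L, (-1:ℂ) ^ ((lam x (l:V)).val)) = 0 := by
        linear_combination hswap
      exact (mul_eq_zero.mp h2).resolve_left two_ne_zero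
  -- double counting
  have TA : (∑ l : L, ∑ x : V, Complex.I ^ (q (x + (l:V))).val) = (N:ℂ) * S := by
    have h1 : ∀ l : L, (∑ x : V, Complex.I ^ (q (x + (l:V))).val) = S := by
      intro l
      exact Fintype.sum_equiv (Equiv.addRight (l:V))
        (fun x => Complex.I ^ (q (x + (l:V))).val)
        (fun x => Complex.I ^ (q x).val) (fun x => rfl)
    rw [Finset.sum_congr rfl (fun l _ => h1 l), Finset.sum_const, Finset.card_univ,
      nsmul_eq_mul]
  have TB : (∑ x : V, ∑ l : L, Complex.I ^ (q (x + (l:V))).val) = (N:ℂ) * N := by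
    have h1 : ∀ x : V, (∑ l : L, Complex.I ^ (q (x + (l:V))).val)
        = Complex.I ^ (q x).val * (if x ∈ L then (N:ℂ) else 0) := by
      intro x
      have h2 : ∀ l : L, Complex.I ^ (q (x + (l:V))).val
          = Complex.I ^ (q x).val * (-1:ℂ) ^ ((lam x (l:V)).val) := by
        intro l
        have : q (x + (l:V)) = q x + 2 * (((lam x (l:V)).val : ℕ) : ZMod 4) := by
          rw [hq, hqL (l:V) l.2, add_zero]
        rw [this, Ipow_add, Ipow_two_mul]
      rw [Finset.sum_congr rfl (fun l _ => h2 l), ← Finset.mul_sum, char x]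
    rw [Finset.sum_congr rfl (fun x _ => h1 x)]
    have h3 : ∀ x : V, Complex.I ^ (q x).val * (if x ∈ L then (N:ℂ) else 0)
        = if x ∈ L then (N:ℂ) else 0 := by
      intro x
      by_cases hx : x ∈ L
      · simp [hx, hqL x hx, show ((0:ZMod 4).val) = 0 from rfl]
      · simp [hx]
    rw [Finset.sum_congr rfl (fun x _ => h3 x), ← Finset.sum_filter,
      Finset.sum_const, nsmul_eq_mul]
    congr 1
    rw [show (Finset.univ.filter (fun x => x ∈ L)).card = N from (Fintype.card_subtype _).symm]
  have hSN : S = (N : ℂ) := by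
    have hcomm : (∑ l : L, ∑ x : V, Complex.I ^ (q (x + (l:V))).val)
        = ∑ x : V, ∑ l : L, Complex.I ^ (q (x + (l:V))).val := Finset.sum_comm
    have hNz : (N : ℂ) ≠ 0 := Nat.cast_ne_zero.mpr Fintype.card_ne_zero
    exact mul_left_cancel₀ hNz (by rw [← TA, hcomm, TB])
  -- now analyze the Gauss sum equation
  set A : ℝ := (Real.sqrt 2) ^ (Module.finrank (ZMod 2) V) with hA
  have hApos : 0 < A := pow_pos (Real.sqrt_pos.mpr (by norm_num)) _
  set z : ℂ := 2 * Real.pi * Complex.I * (b.val : ℂ) / 8 with hz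
  have heq : (N : ℂ) = (A : ℂ) * Complex.exp z := by rw [← hSN]; exact hb
  have hzform : z = ((Real.pi * (b.val : ℝ) / 4 : ℝ) : ℂ) * Complex.I := by
    rw [hz]; push_cast; ring
  have habs : ‖Complex.exp z‖ = 1 := by
    rw [hzform, Complex.norm_exp_ofReal_mul_I]
  have hAz : (A : ℂ) ≠ 0 := by exact_mod_cast hApos.ne'
  have hexpval : Complex.exp z = ((N / A : ℝ) : ℂ) := by
    push_cast
    rw [eq_div_iff hAz, mul_comm]
    exact heq.symm
  have hNA : (N : ℝ) / A = 1 := by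
    have h := habs
    rw [hexpval, Complex.norm_real, Real.norm_eq_abs, abs_of_nonneg (by positivity)] at h
    exact h
  have hexp1 : Complex.exp z = 1 := by rw [hexpval, hNA]; norm_num
  obtain ⟨k, hk⟩ := Complex.exp_eq_one_iff.mp hexp1
  rw [hzform] at hk
  have h2 : ((Real.pi * (b.val : ℝ) / 4 : ℝ) : ℂ) = (((k : ℝ) * (2 * Real.pi) : ℝ) : ℂ) := by
    apply mul_right_cancel₀ Complex.I_ne_zero
    rw [hk]; push_cast; ring
  have hre : Real.pi * (b.val : ℝ) / 4 = (k : ℝ) * (2 * Real.pi) := by exact_mod_cast h2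
  have h3 : Real.pi * ((b.val : ℝ)) = Real.pi * (8 * (k : ℝ)) := by linear_combination 4 * hre
  have hbv : ((b.val : ℝ)) = 8 * (k : ℝ) := mul_left_cancel₀ Real.pi_ne_zero h3
  have hbz : (b.val : ℤ) = 8 * k := by exact_mod_cast hbv
  have hlt : b.val < 8 := ZMod.val_lt b
  have hv0 : b.val = 0 := by omega
  have : (b.val : ZMod 8) = 0 := by rw [hv0]; norm_num
  rwa [ZMod.natCast_val, ZMod.cast_id] at this
end

section
/- BK(V,λ,q) ∈ ℤ/8 is divisible by 4 if and only if q(v) = 0 ∈ ℤ/4, where v is the characteristic element of λ. -/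
open Complex

lemma Ipow_mod_s10 (n : ℕ) : I ^ (n % 4) = I ^ n := by
  conv_rhs => rw [← Nat.div_add_mod n 4]
  rw [pow_add, pow_mul, I_pow_four, one_pow, one_mul]

lemma chi_add (a b : ZMod 4) : I ^ ((a+b).val) = I ^ a.val * I ^ b.val := by
  rw [ZMod.val_add, Ipow_mod_s10, pow_add]

lemma chi_neg (a : ZMod 4) : I ^ ((-a).val) = starRingEnd ℂ (I ^ a.val) := by
  fin_cases a
  · show I ^ (0:ℕ) = starRingEnd ℂ (I ^ (0:ℕ))
    simp
  · show I ^ (3:ℕ) = starRingEnd ℂ (I ^ (1:ℕ))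
    simp [pow_succ, Complex.I_mul_I, Complex.conj_I]
  · show I ^ (2:ℕ) = starRingEnd ℂ (I ^ (2:ℕ))
    simp [pow_succ, Complex.I_mul_I]
  · show I ^ (1:ℕ) = starRingEnd ℂ (I ^ (3:ℕ))
    simp [pow_succ, Complex.I_mul_I, Complex.conj_I]

lemma exp_pi_div_two : Complex.exp ((Real.pi : ℂ)/2 * I) = I := by
  have h : ((Real.pi:ℂ)/2) = ((Real.pi/2:ℝ):ℂ) := by push_cast; ring
  rw [h, Complex.exp_mul_I, ← Complex.ofReal_cos, ← Complex.ofReal_sin,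
    Real.cos_pi_div_two, Real.sin_pi_div_two]
  simp

lemma chi_exp (a : ZMod 4) : I ^ a.val = Complex.exp (2 * Real.pi * I * (2 * a.val) / 8) := by
  conv_lhs => rw [← exp_pi_div_two]
  rw [← Complex.exp_nat_mul]
  congr 1
  ring

lemma div4 : ∀ b : ZMod 8, (∃ c : ZMod 8, b = 4 * c) ↔ b.val % 4 = 0 := by decide

/-- `BK(V,lam,q) ∈ ℤ/8` is divisible by `4` if and only if `q v = 0 ∈ ℤ/4`,
where `v` is the characteristic element of `lam`. -/
theorem brown_kervaire_divisible_by_four_iff {V : Type} [AddCommGroup V] [Module (ZMod 2) V]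
    [Fintype V] [FiniteDimensional (ZMod 2) V]
    (lam : LinearMap.BilinForm (ZMod 2) V)
    (hsymm : ∀ x y : V, lam x y = lam y x)
    (hnd : lam.Nondegenerate)
    (q : V → ZMod 4)
    (hq : ∀ x y : V, q (x + y) = q x + q y + 2 * ((lam x y).val : ZMod 4))
    (v : V) (hv : ∀ x : V, lam x x = lam x v)
    (b : ZMod 8)
    (hb : (∑ x : V, Complex.I ^ (q x).val)
        = ((Real.sqrt 2) ^ (Module.finrank (ZMod 2) V) : ℝ)
          * Complex.exp (2 * Real.pi * Complex.I * (b.val : ℂ) / 8)) :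
    (∃ c : ZMod 8, b = 4 * c) ↔ q v = 0 := by
  classical
  have h0 : q 0 = 0 := by
    have h := hq 0 0
    simp only [add_zero, map_zero, LinearMap.zero_apply, ZMod.val_zero, Nat.cast_zero,
      mul_zero] at h
    linear_combination -h
  have hch : (4 : ZMod 4) = 0 := by decide
  have hkey : ∀ x : V, q (x + v) = q v + -(q x) := by
    intro x
    have hxx : x + x = 0 := by
      have h2 : (2 : ZMod 2) • x = x + x := two_smul _ x
      rw [show (2 : ZMod 2) = 0 by decide, zero_smul] at h2
      exact h2.symm
    have h1 := hq x x
    rw [hxx, h0] at h1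
    have h2 := hq x v
    rw [← hv x] at h2
    linear_combination h2 + h1 + (q x + ((lam x x).val : ZMod 4)) * hch
  set G := ∑ x : V, I ^ (q x).val with hGdef
  have hre : ∑ x : V, I ^ (q (x + v)).val = G :=
    Fintype.sum_equiv (Equiv.addRight v) _ _ (fun x => rfl)
  have hGid : G = I ^ (q v).val * starRingEnd ℂ G := by
    calc G = ∑ x : V, I ^ (q (x + v)).val := hre.symm
      _ = ∑ x : V, I ^ (q v).val * starRingEnd ℂ (I ^ (q x).val) := by
          refine Finset.sum_congr rfl fun x _ => ?_
          rw [hkey x, chi_add, chi_neg]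
      _ = I ^ (q v).val * starRingEnd ℂ G := by
          rw [← Finset.mul_sum, hGdef, map_sum]
  set s : ℝ := Real.sqrt 2 ^ Module.finrank (ZMod 2) V with hsdef
  set z : ℂ := 2 * Real.pi * I * (b.val : ℂ) / 8 with hzdef
  have hs : (s : ℂ) ≠ 0 := by
    apply Complex.ofReal_ne_zero.mpr
    positivity
  have hconjG : starRingEnd ℂ G = (s : ℂ) * Complex.exp (-z) := by
    have hcz : starRingEnd ℂ z = -z := by
      rw [hzdef]
      simp only [map_div₀, map_mul, Complex.conj_I, map_natCast, map_ofNat,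
        Complex.conj_ofReal]
      ring
    rw [hb, map_mul, Complex.conj_ofReal, ← Complex.exp_conj, hcz]
  have h5 : (s : ℂ) * Complex.exp z = (s : ℂ) * (I ^ (q v).val * Complex.exp (-z)) := by
    calc (s : ℂ) * Complex.exp z = G := hb.symm
      _ = I ^ (q v).val * starRingEnd ℂ G := hGid
      _ = I ^ (q v).val * ((s : ℂ) * Complex.exp (-z)) := by rw [hconjG]
      _ = (s : ℂ) * (I ^ (q v).val * Complex.exp (-z)) := by ring
  have hE := mul_left_cancel₀ hs h5
  have hsq : Complex.exp (z + z) = I ^ (q v).val := by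
    rw [Complex.exp_add]
    nth_rewrite 1 [hE]
    rw [mul_assoc, ← Complex.exp_add, neg_add_cancel, Complex.exp_zero, mul_one]
  rw [chi_exp] at hsq
  obtain ⟨m, hm⟩ := Complex.exp_eq_exp_iff_exists_int.mp hsq
  have hI : (2 * (Real.pi : ℂ) * I) ≠ 0 :=
    mul_ne_zero (mul_ne_zero two_ne_zero (Complex.ofReal_ne_zero.mpr Real.pi_ne_zero))
      Complex.I_ne_zero
  have h8 : (2 * (Real.pi : ℂ) * I) * (2 * (b.val : ℂ) - 2 * ((q v).val : ℂ))
      = (2 * (Real.pi : ℂ) * I) * (8 * m) := by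
    rw [hzdef] at hm
    linear_combination 8 * hm
  have h8' := mul_left_cancel₀ hI h8
  have hz : 2 * (b.val : ℤ) - 2 * ((q v).val : ℤ) = 8 * m := by exact_mod_cast h8'
  have hb8 : b.val < 8 := b.val_lt
  have hq4 : (q v).val < 4 := (q v).val_lt
  have hmod : b.val % 4 = (q v).val := by omega
  rw [div4 b, hmod, ZMod.val_eq_zero]
end

section
/- If the characteristic element v of (V,λ,q) satisfies q(v) = 0, then on the subspace L^⊥ = {x ∈ V : λ(x,x)=0}, q takes values in 2ℤ/4 ≅ ℤ/2, and the induced function h = q/2 : L^⊥/⟨v⟩ → ℤ/2 is a well-defined ℤ/2-valued quadratic form refining the induced nonsingular symmetric form [λ] on L^⊥/⟨v⟩, i.e. h(x+y) = h(x) + h(y) + [λ](x,y). -/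
/-- If the characteristic element `v` of `(V,lam,q)` satisfies `q v = 0`, then
on `L^⊥ = {x : lam x x = 0}` the enhancement `q` takes values in `2·ℤ/4 ≅ ℤ/2`, and the
induced function `h = q/2` is well defined on the quotient `L^⊥/⟨v⟩` and is a `ℤ/2`-valued
quadratic refinement of the induced symmetric form: `h (x+y) = h x + h y + lam x y`. -/
theorem half_pontryagin_on_sublagrangian_quotient {V : Type} [AddCommGroup V]
    [Module (ZMod 2) V] [FiniteDimensional (ZMod 2) V]
    (lam : LinearMap.BilinForm (ZMod 2) V)
    (hsymm : ∀ x y : V, lam x y = lam y x)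
    (hnd : lam.Nondegenerate)
    (q : V → ZMod 4)
    (hq : ∀ x y : V, q (x + y) = q x + q y + 2 * ((lam x y).val : ZMod 4))
    (v : V) (hv : ∀ x : V, lam x x = lam x v)
    (hqv : q v = 0) :
    ∃ h : V → ZMod 2,
      (∀ x : V, lam x x = 0 → q x = 2 * ((h x).val : ZMod 4)) ∧
      (∀ x y : V, lam x x = 0 → lam y y = 0 →
        x - y ∈ Submodule.span (ZMod 2) {v} → h x = h y) ∧
      (∀ x y : V, lam x x = 0 → lam y y = 0 → h (x + y) = h x + h y + lam x y) := by
  -- every element is 2-torsion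
  have hxx : ∀ x : V, x + x = 0 := by
    intro x
    have h2 : (2 : ZMod 2) • x = 0 := by
      have : (2 : ZMod 2) = 0 := by decide
      rw [this, zero_smul]
    simpa [two_smul] using h2
  have htwo : ∀ x : V, lam x x = 0 → q x = 0 ∨ q x = 2 := by
    intro x hx
    have h0 : q (x + x) = q x + q x + 2 * ((lam x x).val : ZMod 4) := hq x x
    rw [hxx x, hx] at h0
    have hq0 : q 0 = 0 := by
      have h00 := hq 0 0
      simp only [add_zero, map_zero, LinearMap.zero_apply, ZMod.val_zero,
        Nat.cast_zero, mul_zero] at h00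
      exact ((left_eq_add).mp h00)
    rw [hq0] at h0
    simp only [ZMod.val_zero, Nat.cast_zero, mul_zero, add_zero] at h0
    have key : ∀ a : ZMod 4, 0 = a + a → a = 0 ∨ a = 2 := by decide
    exact key _ h0
  -- q is invariant under adding v on the lightcone
  have hqshift : ∀ y : V, lam y y = 0 → q (y + v) = q y := by
    intro y hy
    have := hq y v
    rw [hqv, add_zero, ← hv y, hy] at this
    simpa using this
  refine ⟨fun x => if q x = 2 then 1 else 0, ?_, ?_, ?_⟩
  · intro x hx
    rcases htwo x hx with h0 | h2
    · simp [h0]; decide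
    · simp [h2]; decide
  · intro x y hx hy hmem
    rcases Submodule.mem_span_singleton.mp hmem with ⟨c, hc⟩
    have hc2 : c = 0 ∨ c = 1 := (by decide : ∀ a : ZMod 2, a = 0 ∨ a = 1) c
    rcases hc2 with rfl | rfl
    · rw [zero_smul] at hc
      have : x = y := by
        have := sub_eq_zero.mp hc.symm
        exact this
      rw [this]
    · rw [one_smul] at hc
      have hxy : x = y + v := by
        have : x - y = v := hc.symm
        rw [← this]; abel
      show (if q x = 2 then (1 : ZMod 2) else 0) = if q y = 2 then 1 else 0
      rw [hxy, hqshift y hy]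
  · intro x y hx hy
    have hxy0 : lam (x + y) (x + y) = 0 := by
      have hexp : lam (x + y) (x + y) = lam x x + lam x y + lam y x + lam y y := by
        simp [map_add, LinearMap.add_apply]
        ring
      rw [hexp, hx, hy, hsymm y x]
      have : ∀ a : ZMod 2, 0 + a + a + 0 = 0 := by decide
      exact this _
    rcases htwo x hx with hqx | hqx <;> rcases htwo y hy with hqy | hqy <;>
      rcases (show lam x y = 0 ∨ lam x y = 1 from by
        have : ∀ a : ZMod 2, a = 0 ∨ a = 1 := by decide
        exact this _) with hl | hl <;>
    · have hsum : q (x + y) = q x + q y + 2 * ((lam x y).val : ZMod 4) := hq x y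
      rw [hqx, hqy, hl] at hsum
      norm_num at hsum
      simp [hsum, hqx, hqy, hl]
      try decide
end
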